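/- Let b ∈ (−2,0), let f_1, f_2 : (0,∞) → [0,∞) be continuous and nonincreasing, and let g : (0,∞) → (0,∞) be regularly varying at zero with index b. Suppose lim_{σ→0} ( inf_{ε>0}{ σ² f_1(ε) + ε² } ) / g(σ) = 1 and lim_{σ→0} ( inf_{ε>0}{ σ² f_2(ε) + ε² } ) / g(σ) = 1. Then lim_{ε→0} f_1(ε)/f_2(ε) = 1, and both f_1 and f_2 are regularly varying at zero with index −(2b+4)/b. -/

import Mathlib

/-!
Write `F σ = inf_{ε>0} (σ² f ε + ε²)`. Since `F ~ g`, `F` is regularly varying with index `b`,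
and its generalized inverse `σ*`, with `F (σ* ε) ~ ε²`, is regularly varying with index `2/b`;
as `F₁ ~ F₂`, also `σ₁* ~ σ₂*`. For a near-minimizer `E σ` of the infimum, an envelope argument
gives `f (E σ) σ² ~ (-b/2) F σ` and hence `(E σ)² ~ (1 + b/2) F σ`. Taking `σ = σ* (θε)` with `θ`
close to `(1 + b/2)^(-1/2)`, where `E σ ≈ ε`, monotonicity of `f` yields
`f ε ~ C_b ε² / σ* (ε)²` with `C_b` depending only on `b`, and both claims follow.
-/

open MeasureTheory ProbabilityTheory Real Set Filter Topology
open scoped ENNReal NNReal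

noncomputable section

/-- `g` is regularly varying at zero with index `b`:
`g(λε)/g(ε) → λ^{-b}` as `ε → 0⁺`, for every `λ > 0`. -/
def RegVaryZero (g : ℝ → ℝ) (b : ℝ) : Prop :=
  ∀ l : ℝ, 0 < l → Filter.Tendsto (fun ε => g (l * ε) / g ε)
    (nhdsWithin 0 (Set.Ioi 0)) (nhds (l ^ (-b)))

lemma tendsto_const_mul_nhdsGT_zero {c : ℝ} (hc : 0 < c) :
    Tendsto (c * ·) (𝓝[>] 0) (𝓝[>] 0) :=
  tendsto_iff_comap.mpr (comap_mulLeft_nhdsGT_zero hc).ge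

lemma tendsto_sq_nhdsGT_zero : Tendsto (fun ε : ℝ => ε ^ 2) (𝓝[>] 0) (𝓝[>] 0) :=
  tendsto_nhdsWithin_iff.2
    ⟨((continuous_pow 2).tendsto' 0 0 (by simp)).mono_left nhdsWithin_le_nhds,
      eventually_nhdsWithin_of_forall fun _ (hε : (0 : ℝ) < _) => pow_pos hε 2⟩

lemma Filter.Tendsto.eventually_const_mul_lt_one {α : Type*} {l : Filter α} {s : α → ℝ}
    (hs : Tendsto s l (𝓝[>] 0)) (ρ : ℝ) : ∀ᶠ x in l, ρ * s x < 1 := by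
  have h : Tendsto (fun x => ρ * s x) l (𝓝 (ρ * 0)) :=
    (tendsto_nhdsWithin_iff.1 hs).1.const_mul ρ
  rw [mul_zero] at h
  exact h.eventually (gt_mem_nhds one_pos)

theorem tendsto_of_squeeze_family {α ι : Type*} {l : Filter α} {p q : Filter ι}
    [p.NeBot] [q.NeBot] {u : α → ℝ} {w : ι → α → ℝ} {V : ι → ℝ} {c : ℝ}
    (hVp : Tendsto V p (𝓝 c)) (hVq : Tendsto V q (𝓝 c))
    (hlo : ∀ᶠ i in p, Tendsto (w i) l (𝓝 (V i)) ∧ ∀ᶠ x in l, w i x ≤ u x)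
    (hhi : ∀ᶠ i in q, Tendsto (w i) l (𝓝 (V i)) ∧ ∀ᶠ x in l, u x ≤ w i x) :
    Tendsto u l (𝓝 c) := by
  refine tendsto_order.2 ⟨fun a ha => ?_, fun a ha => ?_⟩
  · obtain ⟨i, hai, hwi, hle⟩ := ((hVp.eventually (lt_mem_nhds ha)).and hlo).exists
    filter_upwards [hwi.eventually (lt_mem_nhds hai), hle] with x h₁ h₂ using h₁.trans_le h₂
  · obtain ⟨i, hai, hwi, hle⟩ := ((hVq.eventually (gt_mem_nhds ha)).and hhi).exists
    filter_upwards [hwi.eventually (gt_mem_nhds hai), hle] with x h₁ h₂ using h₂.trans_lt h₁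

lemma tendsto_rpow_sub_one_div_sq_sub_one (b : ℝ) :
    Tendsto (fun l : ℝ => (l ^ (-b) - 1) / (l ^ 2 - 1)) (𝓝[≠] 1) (𝓝 (-b / 2)) := by
  have h₁ : HasDerivAt (fun x : ℝ => x ^ (-b)) (-b) 1 := by
    simpa using hasDerivAt_rpow_const (x := (1 : ℝ)) (p := -b) (Or.inl one_ne_zero)
  have h₂ : HasDerivAt (fun x : ℝ => x ^ 2) 2 1 := by simpa using hasDerivAt_pow 2 (1 : ℝ)
  refine ((hasDerivAt_iff_tendsto_slope.1 h₁).div (hasDerivAt_iff_tendsto_slope.1 h₂)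
    two_ne_zero).congr' ?_
  filter_upwards [self_mem_nhdsWithin] with l hl
  simp only [Pi.div_apply, slope_def_field, one_rpow, one_pow]
  exact div_div_div_cancel_right₀ (sub_ne_zero.2 hl) _ _

lemma RegVaryZero.tendsto_comp_mul_div {F g : ℝ → ℝ} {b ρ : ℝ} (hg : RegVaryZero g b)
    (hgpos : ∀ x ∈ Ioi (0 : ℝ), 0 < g x) (hF : Tendsto (fun σ => F σ / g σ) (𝓝[>] 0) (𝓝 1))
    (hρ : 0 < ρ) : Tendsto (fun σ => F (ρ * σ) / g σ) (𝓝[>] 0) (𝓝 (ρ ^ (-b))) := by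
  have h := (hF.comp (tendsto_const_mul_nhdsGT_zero hρ)).mul (hg ρ hρ)
  rw [one_mul] at h
  refine h.congr' ?_
  filter_upwards [self_mem_nhdsWithin] with σ hσ
  exact div_mul_div_cancel₀ (hgpos _ (mul_pos hρ hσ)).ne'

lemma RegVaryZero.of_tendsto_div {f h : ℝ → ℝ} {b C : ℝ} (hh : RegVaryZero h b)
    (hh0 : ∀ᶠ x in 𝓝[>] 0, h x ≠ 0) (hC : C ≠ 0)
    (hf : Tendsto (fun x => f x / h x) (𝓝[>] 0) (𝓝 C)) : RegVaryZero f b := by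
  intro l hl
  have hmul := tendsto_const_mul_nhdsGT_zero hl
  have H := ((hf.comp hmul).mul (hh l hl)).div hf hC
  rw [mul_div_right_comm, div_self hC, one_mul] at H
  refine H.congr' ?_
  filter_upwards [hh0, hmul.eventually hh0] with x hx hlx
  simp only [Pi.div_apply, Function.comp_apply]
  rw [div_mul_div_cancel₀ hlx, div_div_div_cancel_right₀ hx]

lemma RegVaryZero.sq_div_sq {s : ℝ → ℝ} {a : ℝ} (hs : RegVaryZero s a)
    (hspos : ∀ᶠ x in 𝓝[>] 0, 0 < s x) :
    RegVaryZero (fun ε => ε ^ 2 / s ε ^ 2) (-2 - 2 * a) := by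
  intro l hl
  have H := (((hs l hl).inv₀ (rpow_pos_of_pos hl _).ne').pow 2).const_mul (l ^ 2)
  have hval : l ^ 2 * ((l ^ (-a))⁻¹) ^ 2 = l ^ (-(-2 - 2 * a)) := by
    rw [← rpow_neg hl.le, neg_neg, ← rpow_natCast, ← rpow_natCast, ← rpow_mul hl.le,
      ← rpow_add hl]
    norm_num
    ring_nf
  rw [hval] at H
  refine H.congr' ?_
  filter_upwards [hspos, (tendsto_const_mul_nhdsGT_zero hl).eventually hspos,
    self_mem_nhdsWithin] with x h₁ h₂ (h₃ : 0 < x)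
  field_simp

/-- Restricted to `(0, 1]` so that the set is bounded; `sSup ∅ = 0`. -/
def genInv (F : ℝ → ℝ) (y : ℝ) : ℝ := sSup {σ | 0 < σ ∧ σ ≤ 1 ∧ F σ ≤ y}

section genInv

variable {F : ℝ → ℝ} {y σ : ℝ}

lemma genInv_nonneg : 0 ≤ genInv F y := Real.sSup_nonneg fun _ hσ => hσ.1.le

lemma le_genInv (h₀ : 0 < σ) (h₁ : σ ≤ 1) (hσ : F σ ≤ y) : σ ≤ genInv F y :=
  le_csSup ⟨1, fun _ hx => hx.2.1⟩ ⟨h₀, h₁, hσ⟩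

lemma genInv_le (hF : MonotoneOn F (Ioi 0)) (h₀ : 0 < σ) (hσ : y < F σ) : genInv F y ≤ σ :=
  Real.sSup_le (fun _ ⟨hx, _, hxy⟩ => le_of_not_gt fun hσx =>
    (hσ.trans_le (hF h₀ hx hσx.le)).not_ge hxy) h₀.le

lemma apply_le_of_lt_genInv (hF : MonotoneOn F (Ioi 0)) (h₀ : 0 < σ) (hσ : σ < genInv F y) :
    F σ ≤ y :=
  le_of_not_gt fun h => (genInv_le hF h₀ h).not_gt hσ

lemma lt_apply_of_genInv_lt (hσ : genInv F y < σ) (h₁ : σ ≤ 1) : y < F σ :=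
  lt_of_not_ge fun h => hσ.not_ge (le_genInv (genInv_nonneg.trans_lt hσ) h₁ h)

variable {α : Type*} {l : Filter α}

lemma tendsto_genInv {y : α → ℝ} (hF : MonotoneOn F (Ioi 0))
    (hF₀ : Tendsto F (𝓝[>] 0) (𝓝 0)) (hFpos : ∀ σ ∈ Ioi (0 : ℝ), 0 < F σ)
    (hy : Tendsto y l (𝓝[>] 0)) : Tendsto (fun x => genInv F (y x)) l (𝓝[>] 0) := by
  have hy₀ := tendsto_nhdsWithin_iff.1 hy
  refine tendsto_nhdsWithin_iff.2 ⟨tendsto_order.2 ⟨fun a ha => ?_, fun a ha => ?_⟩, ?_⟩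
  · exact Eventually.of_forall fun _ => ha.trans_le genInv_nonneg
  · have hm : 0 < min (a / 2) 1 := lt_min (half_pos ha) one_pos
    filter_upwards [hy₀.1.eventually (gt_mem_nhds (hFpos _ hm))] with x hx
    exact (genInv_le hF hm hx).trans_lt ((min_le_left _ _).trans_lt (by linarith))
  · filter_upwards [hy₀.2] with x (hx : 0 < y x)
    obtain ⟨σ, hσy, hσ⟩ := ((hF₀.eventually (gt_mem_nhds hx)).and (Ioo_mem_nhdsGT one_pos)).exists
    exact hσ.1.trans_le (le_genInv hσ.1 hσ.2.le hσy.le)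

lemma tendsto_genInv_div {s y : α → ℝ} {b c : ℝ} (hF : MonotoneOn F (Ioi 0)) (hb : b < 0)
    (hc : 0 < c) (hs : Tendsto s l (𝓝[>] 0)) (hy : ∀ᶠ x in l, 0 < y x)
    (hlim : ∀ ρ > 0, Tendsto (fun x => F (ρ * s x) / y x) l (𝓝 (ρ ^ (-b) / c ^ (-b)))) :
    Tendsto (fun x => genInv F (y x) / s x) l (𝓝 c) := by
  have hs₀ : ∀ᶠ x in l, 0 < s x := hs.eventually self_mem_nhdsWithin
  have hcb : 0 < c ^ (-b) := rpow_pos_of_pos hc _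
  refine tendsto_of_squeeze_family (p := 𝓝[<] c) (q := 𝓝[>] c) (w := fun ρ _ => ρ)
    (tendsto_id.mono_left nhdsWithin_le_nhds) (tendsto_id.mono_left nhdsWithin_le_nhds) ?_ ?_
  · filter_upwards [Ioo_mem_nhdsLT hc] with ρ ⟨hρ, hρc⟩
    have hlt : ρ ^ (-b) / c ^ (-b) < 1 :=
      (div_lt_one hcb).2 (rpow_lt_rpow hρ.le hρc (neg_pos.2 hb))
    refine ⟨tendsto_const_nhds, ?_⟩
    filter_upwards [(hlim ρ hρ).eventually (gt_mem_nhds hlt), hy, hs₀,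
      hs.eventually_const_mul_lt_one ρ] with x hx hyx hsx hρs
    rw [div_lt_one hyx] at hx
    exact (le_div_iff₀ hsx).2 (le_genInv (mul_pos hρ hsx) hρs.le hx.le)
  · filter_upwards [self_mem_nhdsWithin] with ρ (hρc : c < ρ)
    have hρ := hc.trans hρc
    have hgt : 1 < ρ ^ (-b) / c ^ (-b) :=
      (one_lt_div hcb).2 (rpow_lt_rpow hc.le hρc (neg_pos.2 hb))
    refine ⟨tendsto_const_nhds, ?_⟩
    filter_upwards [(hlim ρ hρ).eventually (lt_mem_nhds hgt), hy, hs₀] with x hx hyx hsx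
    rw [one_lt_div hyx] at hx
    exact (div_le_iff₀ hsx).2 (genInv_le hF (mul_pos hρ hsx) hx)

lemma tendsto_div_of_genInv {y h : α → ℝ} {b : ℝ} (hF : MonotoneOn F (Ioi 0))
    (hs : Tendsto (fun x => genInv F (y x)) l (𝓝[>] 0)) (hh : ∀ᶠ x in l, 0 < h x)
    (hlim : ∀ ρ > 0, Tendsto (fun x => F (ρ * genInv F (y x)) / h x) l (𝓝 (ρ ^ (-b)))) :
    Tendsto (fun x => y x / h x) l (𝓝 1) := by
  have hV : Tendsto (fun ρ : ℝ => ρ ^ (-b)) (𝓝 1) (𝓝 1) := by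
    simpa using (continuousAt_rpow_const 1 (-b) (Or.inl one_ne_zero)).tendsto
  have hs₀ : ∀ᶠ x in l, 0 < genInv F (y x) := hs.eventually self_mem_nhdsWithin
  refine tendsto_of_squeeze_family (p := 𝓝[<] 1) (q := 𝓝[>] 1)
    (w := fun ρ x => F (ρ * genInv F (y x)) / h x)
    (hV.mono_left nhdsWithin_le_nhds) (hV.mono_left nhdsWithin_le_nhds) ?_ ?_
  · filter_upwards [Ioo_mem_nhdsLT one_pos] with ρ ⟨hρ, hρ₁⟩
    refine ⟨hlim ρ hρ, ?_⟩
    filter_upwards [hh, hs₀] with x hhx hsx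
    gcongr
    exact apply_le_of_lt_genInv hF (mul_pos hρ hsx) (mul_lt_of_lt_one_left hsx hρ₁)
  · filter_upwards [self_mem_nhdsWithin] with ρ (hρ₁ : 1 < ρ)
    refine ⟨hlim ρ (one_pos.trans hρ₁), ?_⟩
    filter_upwards [hh, hs₀, hs.eventually_const_mul_lt_one ρ] with x hhx hsx hρs
    gcongr
    exact (lt_apply_of_genInv_lt (lt_mul_of_one_lt_left hsx hρ₁) hρs.le).le

end genInv

/-- Compare `F (r σ)` with `F σ` for `r → 1±`: `-b/2` is the derivative of `r ↦ r^(-b)` with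
respect to `r²` at `1`. -/
lemma tendsto_mul_sq_div_of_supergradient {F D η : ℝ → ℝ} {b : ℝ} (hF : RegVaryZero F b)
    (hFpos : ∀ σ ∈ Ioi (0 : ℝ), 0 < F σ) (hη : Tendsto η (𝓝[>] 0) (𝓝 0))
    (hD : ∀ σ ∈ Ioi (0 : ℝ), ∀ τ ∈ Ioi (0 : ℝ),
      F τ ≤ (1 + η σ) * F σ + (τ ^ 2 - σ ^ 2) * D σ) :
    Tendsto (fun σ => D σ * σ ^ 2 / F σ) (𝓝[>] 0) (𝓝 (-b / 2)) := by
  have h1η : Tendsto (fun σ => 1 + η σ) (𝓝[>] 0) (𝓝 1) := by simpa using hη.const_add 1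
  have hw : ∀ r > 0, Tendsto (fun σ => (F (r * σ) / F σ - (1 + η σ)) / (r ^ 2 - 1))
      (𝓝[>] 0) (𝓝 ((r ^ (-b) - 1) / (r ^ 2 - 1))) := fun r hr =>
    ((hF r hr).sub h1η).div_const _
  have hle : ∀ r > 0, ∀ᶠ σ in 𝓝[>] 0,
      F (r * σ) / F σ - (1 + η σ) ≤ D σ * σ ^ 2 / F σ * (r ^ 2 - 1) := by
    intro r hr
    filter_upwards [self_mem_nhdsWithin] with σ hσ
    have hFσ := hFpos σ hσ
    have key := hD σ hσ (r * σ) (mul_pos hr hσ)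
    rw [← sub_nonneg]
    have hexp : D σ * σ ^ 2 / F σ * (r ^ 2 - 1) - (F (r * σ) / F σ - (1 + η σ)) =
        ((1 + η σ) * F σ + ((r * σ) ^ 2 - σ ^ 2) * D σ - F (r * σ)) / F σ := by
      field_simp
      ring
    rw [hexp]
    exact div_nonneg (by linarith) hFσ.le
  have hV := tendsto_rpow_sub_one_div_sq_sub_one b
  refine tendsto_of_squeeze_family (p := 𝓝[>] 1) (q := 𝓝[<] 1)
    (w := fun r σ => (F (r * σ) / F σ - (1 + η σ)) / (r ^ 2 - 1))
    (hV.mono_left (nhdsWithin_mono _ fun x hx => ne_of_gt hx))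
    (hV.mono_left (nhdsWithin_mono _ fun x hx => ne_of_lt hx)) ?_ ?_
  · filter_upwards [self_mem_nhdsWithin] with r (hr : 1 < r)
    refine ⟨hw r (one_pos.trans hr), ?_⟩
    filter_upwards [hle r (one_pos.trans hr)] with σ hσ
    exact (div_le_iff₀ (by nlinarith)).2 hσ
  · filter_upwards [Ioo_mem_nhdsLT one_pos] with r ⟨hr, hr₁⟩
    refine ⟨hw r hr, ?_⟩
    filter_upwards [hle r hr] with σ hσ
    exact (le_div_iff_of_neg (by nlinarith)).2 hσ

lemma pos_of_tendsto_div_of_monotoneOn {F g : ℝ → ℝ} (hF : MonotoneOn F (Ioi 0))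
    (hgpos : ∀ x ∈ Ioi (0 : ℝ), 0 < g x) (hFg : Tendsto (fun σ => F σ / g σ) (𝓝[>] 0) (𝓝 1)) :
    ∀ σ ∈ Ioi (0 : ℝ), 0 < F σ := by
  intro σ hσ
  obtain ⟨τ, hτF, hτ⟩ :=
    ((hFg.eventually (lt_mem_nhds one_pos)).and (Ioo_mem_nhdsGT (show (0 : ℝ) < σ from hσ))).exists
  exact ((div_pos_iff_of_pos_right (hgpos τ hτ.1)).1 hτF).trans_le (hF hτ.1 hσ hτ.2.le)

def quadInf (f : ℝ → ℝ) (σ : ℝ) : ℝ := ⨅ ε : Ioi (0 : ℝ), (σ ^ 2 * f ε + (ε : ℝ) ^ 2)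

section quadInf

variable {f : ℝ → ℝ}

lemma bddBelow_range_quadInf (hf : ∀ x ∈ Ioi (0 : ℝ), 0 ≤ f x) (σ : ℝ) :
    BddBelow (range fun ε : Ioi (0 : ℝ) => σ ^ 2 * f ε + (ε : ℝ) ^ 2) :=
  ⟨0, by rintro _ ⟨ε, rfl⟩; have := hf ε ε.2; positivity⟩

lemma quadInf_le (hf : ∀ x ∈ Ioi (0 : ℝ), 0 ≤ f x) (σ : ℝ) {x : ℝ} (hx : 0 < x) :
    quadInf f σ ≤ σ ^ 2 * f x + x ^ 2 :=
  ciInf_le (bddBelow_range_quadInf hf σ) ⟨x, hx⟩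

lemma quadInf_nonneg (hf : ∀ x ∈ Ioi (0 : ℝ), 0 ≤ f x) (σ : ℝ) : 0 ≤ quadInf f σ :=
  Real.iInf_nonneg fun ε => by have := hf ε ε.2; positivity

lemma quadInf_monotoneOn (hf : ∀ x ∈ Ioi (0 : ℝ), 0 ≤ f x) : MonotoneOn (quadInf f) (Ioi 0) :=
  fun σ hσ τ _ hστ => ciInf_mono (bddBelow_range_quadInf hf σ) fun ε => by
    have := hf ε ε.2
    have : σ ^ 2 ≤ τ ^ 2 := pow_le_pow_left₀ (le_of_lt hσ) hστ 2
    gcongr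

lemma tendsto_quadInf_zero (hf : ∀ x ∈ Ioi (0 : ℝ), 0 ≤ f x) :
    Tendsto (quadInf f) (𝓝[>] 0) (𝓝 0) := by
  refine tendsto_order.2 ⟨fun a ha => Eventually.of_forall fun σ =>
    ha.trans_le (quadInf_nonneg hf σ), fun a ha => ?_⟩
  set x := min (a / 2) 1
  have hx : 0 < x := lt_min (half_pos ha) one_pos
  have hxa : x ^ 2 < a := by nlinarith [min_le_left (a / 2) 1, min_le_right (a / 2) 1]
  have hlim : Tendsto (fun σ : ℝ => σ ^ 2 * f x + x ^ 2) (𝓝[>] 0) (𝓝 (x ^ 2)) :=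
    ((by fun_prop : Continuous fun σ : ℝ => σ ^ 2 * f x + x ^ 2).tendsto' 0 _
      (by simp)).mono_left nhdsWithin_le_nhds
  filter_upwards [hlim.eventually (gt_mem_nhds hxa)] with σ hσ
  exact (quadInf_le hf σ hx).trans_lt hσ

lemma quadInf_pos {g : ℝ → ℝ} (hf : ∀ x ∈ Ioi (0 : ℝ), 0 ≤ f x)
    (hgpos : ∀ x ∈ Ioi (0 : ℝ), 0 < g x)
    (hl : Tendsto (fun σ => quadInf f σ / g σ) (𝓝[>] 0) (𝓝 1)) :
    ∀ σ ∈ Ioi (0 : ℝ), 0 < quadInf f σ :=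
  pos_of_tendsto_div_of_monotoneOn (quadInf_monotoneOn hf) hgpos hl

def IsNearMinimizer (f E : ℝ → ℝ) : Prop :=
  ∀ σ ∈ Ioi (0 : ℝ), 0 < E σ ∧ σ ^ 2 * f (E σ) + E σ ^ 2 ≤ (1 + σ) * quadInf f σ

lemma exists_isNearMinimizer (hFpos : ∀ σ ∈ Ioi (0 : ℝ), 0 < quadInf f σ) :
    ∃ E, IsNearMinimizer f E := by
  have h : ∀ σ : ℝ, ∃ x : ℝ, 0 < σ →
      0 < x ∧ σ ^ 2 * f x + x ^ 2 ≤ (1 + σ) * quadInf f σ := by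
    intro σ
    by_cases hσ : 0 < σ
    · have hlt : quadInf f σ < (1 + σ) * quadInf f σ := by nlinarith [hFpos σ hσ]
      obtain ⟨⟨x, hx⟩, hxσ⟩ := exists_lt_of_ciInf_lt hlt
      exact ⟨x, fun _ => ⟨hx, hxσ.le⟩⟩
    · exact ⟨1, fun h => absurd h hσ⟩
  choose E hE using h
  exact ⟨E, fun σ hσ => hE σ hσ⟩

/-- Envelope argument: `f (E σ)` is the (approximate) derivative of `quadInf f` in `σ²`. -/
lemma IsNearMinimizer.tendsto_mul_sq_div {E : ℝ → ℝ} {b : ℝ} (hE : IsNearMinimizer f E)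
    (hf : ∀ x ∈ Ioi (0 : ℝ), 0 ≤ f x) (hF : RegVaryZero (quadInf f) b)
    (hFpos : ∀ σ ∈ Ioi (0 : ℝ), 0 < quadInf f σ) :
    Tendsto (fun σ => f (E σ) * σ ^ 2 / quadInf f σ) (𝓝[>] 0) (𝓝 (-b / 2)) := by
  refine tendsto_mul_sq_div_of_supergradient hF hFpos
    (tendsto_id.mono_left nhdsWithin_le_nhds) fun σ hσ τ _ => ?_
  have h₁ := quadInf_le hf τ (hE σ hσ).1
  have h₂ := (hE σ hσ).2
  simp only [id]
  linarith

lemma IsNearMinimizer.tendsto_sq_div {E : ℝ → ℝ} {b : ℝ} (hE : IsNearMinimizer f E)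
    (hf : ∀ x ∈ Ioi (0 : ℝ), 0 ≤ f x) (hFpos : ∀ σ ∈ Ioi (0 : ℝ), 0 < quadInf f σ)
    (hA : Tendsto (fun σ => f (E σ) * σ ^ 2 / quadInf f σ) (𝓝[>] 0) (𝓝 (-b / 2))) :
    Tendsto (fun σ => E σ ^ 2 / quadInf f σ) (𝓝[>] 0) (𝓝 (1 + b / 2)) := by
  have hσ₀ : Tendsto (fun σ : ℝ => σ) (𝓝[>] 0) (𝓝 0) := tendsto_id.mono_left nhdsWithin_le_nhds
  refine tendsto_of_tendsto_of_tendsto_of_le_of_le'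
    (g := fun σ => 1 - f (E σ) * σ ^ 2 / quadInf f σ)
    (h := fun σ => 1 + σ - f (E σ) * σ ^ 2 / quadInf f σ)
    (by convert tendsto_const_nhds.sub hA using 2; ring)
    (by convert (hσ₀.const_add 1).sub hA using 2; ring) ?_ ?_
  all_goals
    filter_upwards [self_mem_nhdsWithin] with σ hσ
    have hFσ := hFpos σ hσ
    have h₁ := quadInf_le hf σ (hE σ hσ).1
    have h₂ := (hE σ hσ).2
    rw [← sub_nonneg]
    field_simp
    nlinarith

end quadInf

def quadInfInv (f : ℝ → ℝ) (ε : ℝ) : ℝ := genInv (quadInf f) (ε ^ 2)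

section quadInfInv

variable {f g : ℝ → ℝ} {b : ℝ}

lemma tendsto_quadInfInv (hf : ∀ x ∈ Ioi (0 : ℝ), 0 ≤ f x) (hgpos : ∀ x ∈ Ioi (0 : ℝ), 0 < g x)
    (hl : Tendsto (fun σ => quadInf f σ / g σ) (𝓝[>] 0) (𝓝 1)) :
    Tendsto (quadInfInv f) (𝓝[>] 0) (𝓝[>] 0) :=
  tendsto_genInv (quadInf_monotoneOn hf) (tendsto_quadInf_zero hf) (quadInf_pos hf hgpos hl)
    tendsto_sq_nhdsGT_zero

lemma tendsto_comp_quadInfInv_div_sq (hf : ∀ x ∈ Ioi (0 : ℝ), 0 ≤ f x)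
    (hgpos : ∀ x ∈ Ioi (0 : ℝ), 0 < g x) (hrv : RegVaryZero g b)
    (hl : Tendsto (fun σ => quadInf f σ / g σ) (𝓝[>] 0) (𝓝 1)) :
    Tendsto (fun ε => g (quadInfInv f ε) / ε ^ 2) (𝓝[>] 0) (𝓝 1) := by
  have hs := tendsto_quadInfInv hf hgpos hl
  have h := (tendsto_div_of_genInv (y := fun ε => ε ^ 2) (h := fun ε => g (quadInfInv f ε))
    (quadInf_monotoneOn hf) hs (hs.eventually (eventually_mem_nhdsWithin.mono hgpos))
    fun ρ hρ => (hrv.tendsto_comp_mul_div hgpos hl hρ).comp hs).inv₀ one_ne_zero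
  simpa only [inv_div, inv_one] using h

lemma tendsto_comp_mul_quadInfInv_div_sq {H : ℝ → ℝ} {ρ : ℝ} (hf : ∀ x ∈ Ioi (0 : ℝ), 0 ≤ f x)
    (hgpos : ∀ x ∈ Ioi (0 : ℝ), 0 < g x) (hrv : RegVaryZero g b)
    (hl : Tendsto (fun σ => quadInf f σ / g σ) (𝓝[>] 0) (𝓝 1))
    (hH : Tendsto (fun σ => H σ / g σ) (𝓝[>] 0) (𝓝 1)) (hρ : 0 < ρ) :
    Tendsto (fun ε => H (ρ * quadInfInv f ε) / ε ^ 2) (𝓝[>] 0) (𝓝 (ρ ^ (-b))) := by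
  have hs := tendsto_quadInfInv hf hgpos hl
  have h := ((hrv.tendsto_comp_mul_div hgpos hH hρ).comp hs).mul
    (tendsto_comp_quadInfInv_div_sq hf hgpos hrv hl)
  rw [mul_one] at h
  refine h.congr' ?_
  filter_upwards [hs.eventually self_mem_nhdsWithin] with ε hε
  exact div_mul_div_cancel₀ (hgpos _ hε).ne'

lemma regVaryZero_quadInfInv (hb : b < 0) (hf : ∀ x ∈ Ioi (0 : ℝ), 0 ≤ f x)
    (hgpos : ∀ x ∈ Ioi (0 : ℝ), 0 < g x) (hrv : RegVaryZero g b)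
    (hl : Tendsto (fun σ => quadInf f σ / g σ) (𝓝[>] 0) (𝓝 1)) :
    RegVaryZero (quadInfInv f) (2 / b) := by
  intro μ hμ
  have hμb : (μ ^ (-(2 / b))) ^ (-b) = μ ^ 2 := by
    rw [← rpow_mul hμ.le, show -(2 / b) * -b = ((2 : ℕ) : ℝ) by field_simp [hb.ne]; norm_num,
      rpow_natCast]
  refine tendsto_genInv_div (quadInf_monotoneOn hf) hb (rpow_pos_of_pos hμ _)
    (tendsto_quadInfInv hf hgpos hl) (eventually_mem_nhdsWithin.mono fun ε (hε : 0 < ε) =>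
      pow_pos (mul_pos hμ hε) 2) fun ρ hρ => ?_
  rw [hμb]
  refine ((tendsto_comp_mul_quadInfInv_div_sq hf hgpos hrv hl hl hρ).div_const (μ ^ 2)).congr ?_
  intro ε
  rw [div_div, mul_pow, mul_comm (ε ^ 2)]

lemma tendsto_quadInfInv_div_quadInfInv {f₁ f₂ : ℝ → ℝ} (hb : b < 0)
    (h₁ : ∀ x ∈ Ioi (0 : ℝ), 0 ≤ f₁ x) (h₂ : ∀ x ∈ Ioi (0 : ℝ), 0 ≤ f₂ x)
    (hgpos : ∀ x ∈ Ioi (0 : ℝ), 0 < g x) (hrv : RegVaryZero g b)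
    (hl₁ : Tendsto (fun σ => quadInf f₁ σ / g σ) (𝓝[>] 0) (𝓝 1))
    (hl₂ : Tendsto (fun σ => quadInf f₂ σ / g σ) (𝓝[>] 0) (𝓝 1)) :
    Tendsto (fun ε => quadInfInv f₁ ε / quadInfInv f₂ ε) (𝓝[>] 0) (𝓝 1) :=
  tendsto_genInv_div (quadInf_monotoneOn h₁) hb one_pos (tendsto_quadInfInv h₂ hgpos hl₂)
    (eventually_mem_nhdsWithin.mono fun ε (hε : 0 < ε) => pow_pos hε 2) fun ρ hρ => by
      simpa only [one_rpow, div_one] using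
        tendsto_comp_mul_quadInfInv_div_sq h₂ hgpos hrv hl₂ hl₁ hρ

end quadInfInv

lemma tendsto_comp_comp_mul_div_sq {F s K : ℝ → ℝ} {k θ : ℝ} (hθ : 0 < θ)
    (hK : Tendsto (fun σ => K σ / F σ) (𝓝[>] 0) (𝓝 k)) (hs : Tendsto s (𝓝[>] 0) (𝓝[>] 0))
    (hFs : Tendsto (fun ε => F (s ε) / ε ^ 2) (𝓝[>] 0) (𝓝 1))
    (hFpos : ∀ σ ∈ Ioi (0 : ℝ), 0 < F σ) :
    Tendsto (fun ε => K (s (θ * ε)) / ε ^ 2) (𝓝[>] 0) (𝓝 (k * θ ^ 2)) := by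
  have hmul := tendsto_const_mul_nhdsGT_zero hθ
  have h := ((hK.comp (hs.comp hmul)).mul (hFs.comp hmul)).mul_const (θ ^ 2)
  rw [mul_one] at h
  refine h.congr' ?_
  filter_upwards [(hs.comp hmul).eventually self_mem_nhdsWithin, self_mem_nhdsWithin]
    with ε hsε (hε : 0 < ε)
  have := (hFpos _ hsε).ne'
  simp only [Function.comp_apply] at this ⊢
  field_simp

def tauberConst (b : ℝ) : ℝ :=
  -b / 2 * (√(1 + b / 2))⁻¹ ^ 2 * ((√(1 + b / 2))⁻¹ ^ (2 / b)) ^ 2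

lemma tauberConst_pos {b : ℝ} (hb : b ∈ Ioo (-2 : ℝ) 0) : 0 < tauberConst b := by
  have ht : 0 < (√(1 + b / 2))⁻¹ := inv_pos.2 (sqrt_pos.2 (by linarith [hb.1]))
  have := rpow_pos_of_pos ht (2 / b)
  have : 0 < -b / 2 := by linarith [hb.2]
  unfold tauberConst
  positivity

/-- For `θ` on either side of `(√a)⁻¹`, `e θ ε` lies eventually on either side of `ε`, so
monotonicity of `f` squeezes `f ε` between the values `f (e θ ε)`. -/
lemma AntitoneOn.tendsto_mul_of_tendsto_sq_div {f S V : ℝ → ℝ} {e : ℝ → ℝ → ℝ} {a : ℝ}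
    (hm : AntitoneOn f (Ioi 0)) (ha : 0 < a) (hS : ∀ᶠ ε in 𝓝[>] 0, 0 ≤ S ε)
    (he : ∀ θ > 0, ∀ᶠ ε in 𝓝[>] 0, 0 < e θ ε)
    (he₂ : ∀ θ > 0, Tendsto (fun ε => e θ ε ^ 2 / ε ^ 2) (𝓝[>] 0) (𝓝 (a * θ ^ 2)))
    (hw : ∀ θ > 0, Tendsto (fun ε => f (e θ ε) * S ε) (𝓝[>] 0) (𝓝 (V θ)))
    (hV : ContinuousAt V (√a)⁻¹) :
    Tendsto (fun ε => f ε * S ε) (𝓝[>] 0) (𝓝 (V (√a)⁻¹)) := by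
  have ht₀ : 0 < (√a)⁻¹ := inv_pos.2 (sqrt_pos.2 ha)
  have ht₀sq : a * (√a)⁻¹ ^ 2 = 1 := by rw [inv_pow, sq_sqrt ha.le, mul_inv_cancel₀ ha.ne']
  refine tendsto_of_squeeze_family (p := 𝓝[>] (√a)⁻¹) (q := 𝓝[<] (√a)⁻¹)
    (w := fun θ ε => f (e θ ε) * S ε)
    (hV.tendsto.mono_left nhdsWithin_le_nhds) (hV.tendsto.mono_left nhdsWithin_le_nhds) ?_ ?_
  · filter_upwards [self_mem_nhdsWithin] with θ (hθ : (√a)⁻¹ < θ)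
    have hθ₀ := ht₀.trans hθ
    have h₁ : 1 < a * θ ^ 2 := by
      have := pow_lt_pow_left₀ hθ ht₀.le two_ne_zero
      nlinarith
    refine ⟨hw θ hθ₀, ?_⟩
    filter_upwards [(he₂ θ hθ₀).eventually (lt_mem_nhds h₁), self_mem_nhdsWithin, he θ hθ₀, hS]
      with ε hε (hε₀ : 0 < ε) heε hSε
    rw [one_lt_div (pow_pos hε₀ 2), pow_lt_pow_iff_left₀ hε₀.le heε.le two_ne_zero] at hε
    exact mul_le_mul_of_nonneg_right (hm hε₀ heε hε.le) hSε
  · filter_upwards [Ioo_mem_nhdsLT ht₀] with θ ⟨hθ₀, hθ⟩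
    have h₁ : a * θ ^ 2 < 1 := by
      have := pow_lt_pow_left₀ hθ hθ₀.le two_ne_zero
      nlinarith
    refine ⟨hw θ hθ₀, ?_⟩
    filter_upwards [(he₂ θ hθ₀).eventually (gt_mem_nhds h₁), self_mem_nhdsWithin, he θ hθ₀, hS]
      with ε hε (hε₀ : 0 < ε) heε hSε
    rw [div_lt_one (pow_pos hε₀ 2), pow_lt_pow_iff_left₀ heε.le hε₀.le two_ne_zero] at hε
    exact mul_le_mul_of_nonneg_right (hm heε hε₀ hε.le) hSε

/-- With `σ = quadInfInv f (θ ε)` and a near-minimizer `E`, one has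
`f (E σ) ≈ (-b/2) θ² ε² / σ²` and `E σ ≈ √(1 + b/2) θ ε`. -/
theorem tendsto_mul_quadInfInv_sq_div {f g : ℝ → ℝ} {b : ℝ} (hb : b ∈ Ioo (-2 : ℝ) 0)
    (hm : AntitoneOn f (Ioi 0)) (hf : ∀ x ∈ Ioi (0 : ℝ), 0 ≤ f x)
    (hgpos : ∀ x ∈ Ioi (0 : ℝ), 0 < g x) (hrv : RegVaryZero g b)
    (hl : Tendsto (fun σ => quadInf f σ / g σ) (𝓝[>] 0) (𝓝 1)) :
    Tendsto (fun ε => f ε * quadInfInv f ε ^ 2 / ε ^ 2) (𝓝[>] 0) (𝓝 (tauberConst b)) := by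
  have hFpos := quadInf_pos hf hgpos hl
  have hs := tendsto_quadInfInv hf hgpos hl
  have hsθ : ∀ θ > 0, ∀ᶠ ε in 𝓝[>] 0, 0 < quadInfInv f (θ * ε) := fun θ hθ =>
    (hs.comp (tendsto_const_mul_nhdsGT_zero hθ)).eventually self_mem_nhdsWithin
  have hFs : Tendsto (fun ε => quadInf f (quadInfInv f ε) / ε ^ 2) (𝓝[>] 0) (𝓝 1) := by
    simpa using tendsto_comp_mul_quadInfInv_div_sq hf hgpos hrv hl hl one_pos
  have hsrv := regVaryZero_quadInfInv hb.2 hf hgpos hrv hl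
  obtain ⟨E, hE⟩ := exists_isNearMinimizer hFpos
  have hA := hE.tendsto_mul_sq_div hf
    (hrv.of_tendsto_div (eventually_mem_nhdsWithin.mono fun x hx => (hgpos x hx).ne')
      one_ne_zero hl) hFpos
  have hw : ∀ θ > 0,
      Tendsto (fun ε => f (E (quadInfInv f (θ * ε))) * (quadInfInv f ε ^ 2 / ε ^ 2)) (𝓝[>] 0)
        (𝓝 (-b / 2 * θ ^ 2 * (θ ^ (2 / b)) ^ 2)) := by
    intro θ hθ
    have h := (tendsto_comp_comp_mul_div_sq hθ hA hs hFs hFpos).mul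
      (((hsrv θ hθ).inv₀ (rpow_pos_of_pos hθ _).ne').pow 2)
    rw [rpow_neg hθ.le, inv_inv] at h
    refine h.congr' ?_
    filter_upwards [hs.eventually self_mem_nhdsWithin, hsθ θ hθ, self_mem_nhdsWithin]
      with ε (h₁ : 0 < quadInfInv f ε) h₂ (h₃ : 0 < ε)
    field_simp
  have ht₀ : 0 < (√(1 + b / 2))⁻¹ := inv_pos.2 (sqrt_pos.2 (by linarith [hb.1]))
  simp only [mul_div_assoc]
  refine hm.tendsto_mul_of_tendsto_sq_div (by linarith [hb.1])
    (Eventually.of_forall fun ε => by positivity)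
    (fun θ hθ => (hsθ θ hθ).mono fun ε h => (hE _ h).1)
    (fun θ hθ => tendsto_comp_comp_mul_div_sq hθ (hE.tendsto_sq_div hf hFpos hA) hs hFs hFpos)
    hw (by fun_prop (disch := exact Or.inl ht₀.ne'))

lemma RegVaryZero.of_tendsto_mul_sq_div {f s : ℝ → ℝ} {a C : ℝ} (hs : RegVaryZero s a)
    (hspos : ∀ᶠ x in 𝓝[>] 0, 0 < s x) (hC : C ≠ 0)
    (hf : Tendsto (fun ε => f ε * s ε ^ 2 / ε ^ 2) (𝓝[>] 0) (𝓝 C)) :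
    RegVaryZero f (-2 - 2 * a) :=
  (hs.sq_div_sq hspos).of_tendsto_div
    (by filter_upwards [hspos, self_mem_nhdsWithin] with x h₁ (h₂ : 0 < x); positivity) hC
    (by simpa only [div_div_eq_mul_div] using hf)

lemma tendsto_div_of_tendsto_mul_sq_div {f₁ f₂ s₁ s₂ : ℝ → ℝ} {C : ℝ} (hC : C ≠ 0)
    (h₁ : Tendsto (fun ε => f₁ ε * s₁ ε ^ 2 / ε ^ 2) (𝓝[>] 0) (𝓝 C))
    (h₂ : Tendsto (fun ε => f₂ ε * s₂ ε ^ 2 / ε ^ 2) (𝓝[>] 0) (𝓝 C))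
    (hs : Tendsto (fun ε => s₁ ε / s₂ ε) (𝓝[>] 0) (𝓝 1))
    (hs₁ : ∀ᶠ x in 𝓝[>] 0, 0 < s₁ x) (hs₂ : ∀ᶠ x in 𝓝[>] 0, 0 < s₂ x) :
    Tendsto (fun ε => f₁ ε / f₂ ε) (𝓝[>] 0) (𝓝 1) := by
  have h := (h₁.mul ((hs.inv₀ one_ne_zero).pow 2)).div h₂ hC
  rw [inv_one, one_pow, mul_one, div_self hC] at h
  refine h.congr' ?_
  filter_upwards [hs₁, hs₂, self_mem_nhdsWithin] with ε hε₁ hε₂ (hε : 0 < ε)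
  have e₁ : f₁ ε * s₁ ε ^ 2 / ε ^ 2 * (s₁ ε / s₂ ε)⁻¹ ^ 2 = f₁ ε * (s₂ ε ^ 2 / ε ^ 2) := by
    field_simp
  have e₂ : f₂ ε * s₂ ε ^ 2 / ε ^ 2 = f₂ ε * (s₂ ε ^ 2 / ε ^ 2) := mul_div_assoc _ _ _
  simp only [Pi.div_apply]
  rw [e₁, e₂, mul_div_mul_right _ _ (by positivity)]

theorem tauberian_infimum_general (b : ℝ) (hb : b ∈ Set.Ioo (-2 : ℝ) 0)
    (f₁ f₂ g : ℝ → ℝ)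
    (h₁m : AntitoneOn f₁ (Set.Ioi 0)) (h₂m : AntitoneOn f₂ (Set.Ioi 0))
    (h₁nn : ∀ x ∈ Set.Ioi (0:ℝ), 0 ≤ f₁ x) (h₂nn : ∀ x ∈ Set.Ioi (0:ℝ), 0 ≤ f₂ x)
    (hgpos : ∀ x ∈ Set.Ioi (0:ℝ), 0 < g x)
    (hrv : RegVaryZero g b)
    (hl₁ : Filter.Tendsto
      (fun σ => (⨅ ε : Set.Ioi (0:ℝ), (σ ^ 2 * f₁ ε + (ε : ℝ) ^ 2)) / g σ)
      (nhdsWithin 0 (Set.Ioi 0)) (nhds 1))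
    (hl₂ : Filter.Tendsto
      (fun σ => (⨅ ε : Set.Ioi (0:ℝ), (σ ^ 2 * f₂ ε + (ε : ℝ) ^ 2)) / g σ)
      (nhdsWithin 0 (Set.Ioi 0)) (nhds 1)) :
    Filter.Tendsto (fun ε => f₁ ε / f₂ ε) (nhdsWithin 0 (Set.Ioi 0)) (nhds 1) ∧
    RegVaryZero f₁ (-(2 * b + 4) / b) ∧ RegVaryZero f₂ (-(2 * b + 4) / b) := by
  have hC := (tauberConst_pos hb).ne'
  have hM₁ := tendsto_mul_quadInfInv_sq_div hb h₁m h₁nn hgpos hrv hl₁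
  have hM₂ := tendsto_mul_quadInfInv_sq_div hb h₂m h₂nn hgpos hrv hl₂
  have hs₁ := (tendsto_quadInfInv h₁nn hgpos hl₁).eventually self_mem_nhdsWithin
  have hs₂ := (tendsto_quadInfInv h₂nn hgpos hl₂).eventually self_mem_nhdsWithin
  have hindex : -(2 * b + 4) / b = -2 - 2 * (2 / b) := by field_simp [hb.2.ne]; ring
  rw [hindex]
  exact ⟨tendsto_div_of_tendsto_mul_sq_div hC hM₁ hM₂
      (tendsto_quadInfInv_div_quadInfInv hb.2 h₁nn h₂nn hgpos hrv hl₁ hl₂) hs₁ hs₂,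
    (regVaryZero_quadInfInv hb.2 h₁nn hgpos hrv hl₁).of_tendsto_mul_sq_div hs₁ hC hM₁,
    (regVaryZero_quadInfInv hb.2 h₂nn hgpos hrv hl₂).of_tendsto_mul_sq_div hs₂ hC hM₂⟩

/-- Tauberian theorem for the infimum: if both
`inf_{ε>0}{σ² f_i(ε) + ε²}` are asymptotically equivalent to a function `g` regularly
varying at zero with index `b ∈ (−2,0)`, then `f₁ ∼ f₂` at `0⁺` and both are regularly
varying at zero with index `−(2b+4)/b`. -/
theorem tauberian_infimum (b : ℝ) (hb : b ∈ Set.Ioo (-2 : ℝ) 0)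
    (f₁ f₂ g : ℝ → ℝ)
    (h₁c : ContinuousOn f₁ (Set.Ioi 0)) (h₂c : ContinuousOn f₂ (Set.Ioi 0))
    (h₁m : AntitoneOn f₁ (Set.Ioi 0)) (h₂m : AntitoneOn f₂ (Set.Ioi 0))
    (h₁nn : ∀ x ∈ Set.Ioi (0:ℝ), 0 ≤ f₁ x) (h₂nn : ∀ x ∈ Set.Ioi (0:ℝ), 0 ≤ f₂ x)
    (hgpos : ∀ x ∈ Set.Ioi (0:ℝ), 0 < g x)
    (hrv : RegVaryZero g b)
    (hl₁ : Filter.Tendsto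
      (fun σ => (⨅ ε : Set.Ioi (0:ℝ), (σ ^ 2 * f₁ ε + (ε : ℝ) ^ 2)) / g σ)
      (nhdsWithin 0 (Set.Ioi 0)) (nhds 1))
    (hl₂ : Filter.Tendsto
      (fun σ => (⨅ ε : Set.Ioi (0:ℝ), (σ ^ 2 * f₂ ε + (ε : ℝ) ^ 2)) / g σ)
      (nhdsWithin 0 (Set.Ioi 0)) (nhds 1)) :
    Filter.Tendsto (fun ε => f₁ ε / f₂ ε) (nhdsWithin 0 (Set.Ioi 0)) (nhds 1) ∧
    RegVaryZero f₁ (-(2 * b + 4) / b) ∧ RegVaryZero f₂ (-(2 * b + 4) / b) :=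
  tauberian_infimum_general b hb f₁ f₂ g h₁m h₂m h₁nn h₂nn hgpos hrv hl₁ hl₂
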